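/- arXiv:1210.2082 — 6 statements merged into one kernel-verified Lean document; each statement's English description precedes it below -/
import Mathlib

section
/- For α ∈ Z^n and μ ∈ N^n with Supp(α) ⊆ Supp(μ), the initial term of ∂_α(e^μ) with respect to the graded lexicographic order on C[e_1,...,e_n] is α_i μ_i e^μ/e_i, where i is the maximal element of Supp(α) (assuming α ≠ 0). -/
/-! `∂_α e^μ = Σⱼ αⱼ μⱼ e^μ/eⱼ`, and the monomials `e^μ/eⱼ` with `j ∈ Supp(μ)` are pairwise
distinct, of degree `|μ| - 1`, and decrease in graded lex order as `j` increases; so the term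
with the largest `j ∈ Supp(α)` is the initial one. -/

open MvPolynomial

/-- The derivation `∂_α = Σᵢ αᵢ ∂/∂eᵢ` on `ℂ[e₁,…,eₙ]`. -/
noncomputable def pd {n : ℕ} (α : Fin n → ℤ) (f : MvPolynomial (Fin n) ℂ) :
    MvPolynomial (Fin n) ℂ :=
  ∑ i : Fin n, (α i : ℂ) • MvPolynomial.pderiv i f

/-- Graded lexicographic order on exponent vectors, with `e₁ > e₂ > … > eₙ`:
compare total degree first, then lexicographically (the first index where the
exponents differ decides, a larger exponent on an earlier variable being larger). -/
def glexLT {n : ℕ} (ν κ : Fin n →₀ ℕ) : Prop :=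
  (∑ j : Fin n, ν j) < (∑ j : Fin n, κ j) ∨
    ((∑ j : Fin n, ν j) = (∑ j : Fin n, κ j) ∧
      ∃ j : Fin n, ν j < κ j ∧ ∀ l : Fin n, l < j → ν l = κ l)

section TsubSingle

variable {σ : Type*} (μ : σ →₀ ℕ)

theorem tsub_single_one_apply [DecidableEq σ] (j k : σ) :
    (μ - Finsupp.single j 1 : σ →₀ ℕ) k = μ k - if j = k then 1 else 0 := by
  simp [Finsupp.single_apply]

theorem eq_of_tsub_single_one_eq {i j : σ} (hj : μ j ≠ 0)
    (h : μ - Finsupp.single j 1 = μ - Finsupp.single i 1) : j = i := by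
  classical
  by_contra hji
  have hμj := DFunLike.congr_fun h j
  rw [tsub_single_one_apply, tsub_single_one_apply, if_pos rfl, if_neg (Ne.symm hji)] at hμj
  omega

theorem sum_tsub_single_one_add_one [Fintype σ] {j : σ} (hj : μ j ≠ 0) :
    ∑ k, (μ - Finsupp.single j 1 : σ →₀ ℕ) k + 1 = ∑ k, μ k := by
  classical
  have hle : Finsupp.single j 1 ≤ μ := Finsupp.single_le_iff.mpr (Nat.one_le_iff_ne_zero.mpr hj)
  conv_rhs => rw [← tsub_add_cancel_of_le hle]
  simp only [Finsupp.coe_add, Pi.add_apply, Finset.sum_add_distrib, Finsupp.single_apply,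
    Finset.sum_ite_eq, Finset.mem_univ, if_true]

end TsubSingle

theorem glexLT_tsub_single_one {n : ℕ} {μ : Fin n →₀ ℕ} {i j : Fin n} (hji : j < i)
    (hμi : μ i ≠ 0) (hμj : μ j ≠ 0) :
    glexLT (μ - Finsupp.single j 1) (μ - Finsupp.single i 1) := by
  have hdeg_j := sum_tsub_single_one_add_one μ hμj
  have hdeg_i := sum_tsub_single_one_add_one μ hμi
  refine Or.inr ⟨by omega, j, ?_, fun l hl => ?_⟩
  · rw [tsub_single_one_apply, tsub_single_one_apply, if_pos rfl, if_neg hji.ne']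
    omega
  · rw [tsub_single_one_apply, tsub_single_one_apply, if_neg hl.ne', if_neg (hl.trans hji).ne']

theorem coeff_pd_monomial {n : ℕ} (α : Fin n → ℤ) (μ ν : Fin n →₀ ℕ) :
    coeff ν (pd α (monomial μ (1 : ℂ)))
      = ∑ j, if μ - Finsupp.single j 1 = ν then (α j : ℂ) * (μ j : ℂ) else 0 := by
  simp [pd, coeff_sum, pderiv_monomial, coeff_monomial, mul_ite]

theorem exists_eq_tsub_single_one_of_mem_support_pd {n : ℕ} {α : Fin n → ℤ} {μ ν : Fin n →₀ ℕ}
    (hν : ν ∈ (pd α (monomial μ (1 : ℂ))).support) :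
    ∃ j, α j ≠ 0 ∧ μ j ≠ 0 ∧ μ - Finsupp.single j 1 = ν := by
  rw [mem_support_iff, coeff_pd_monomial] at hν
  obtain ⟨j, -, hj⟩ := Finset.exists_ne_zero_of_sum_ne_zero hν
  by_cases hjν : μ - Finsupp.single j 1 = ν
  · rw [if_pos hjν, mul_ne_zero_iff, Int.cast_ne_zero, Nat.cast_ne_zero] at hj
    exact ⟨j, hj.1, hj.2, hjν⟩
  · exact absurd (if_neg hjν) hj

theorem coeff_tsub_single_one_pd_monomial {n : ℕ} (α : Fin n → ℤ) (μ : Fin n →₀ ℕ) (i : Fin n) :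
    coeff (μ - Finsupp.single i 1) (pd α (monomial μ (1 : ℂ))) = (α i : ℂ) * (μ i : ℂ) := by
  rw [coeff_pd_monomial, Finset.sum_eq_single i (fun j _ hji => ?_) (by simp), if_pos rfl]
  by_cases hμj : μ j = 0
  · simp [hμj]
  · rw [if_neg (mt (eq_of_tsub_single_one_eq μ hμj) hji)]

/-- for `α ∈ ℤⁿ` nonzero and `μ ∈ ℕⁿ` with `Supp(α) ⊆ Supp(μ)`, the initial
term of `∂_α(e^μ)` with respect to graded lex is `αᵢ μᵢ e^μ/eᵢ` where `i = max Supp(α)`: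
the coefficient of the monomial `e^μ/eᵢ` in `∂_α(e^μ)` equals `αᵢ μᵢ ≠ 0`, and every
other monomial occurring in `∂_α(e^μ)` is strictly smaller in graded lex order. -/
theorem stmt6 (n : ℕ) (α : Fin n → ℤ) (μ : Fin n →₀ ℕ) (i : Fin n)
    (hsupp : ∀ j, α j ≠ 0 → μ j ≠ 0)
    (hi : α i ≠ 0) (hmax : ∀ j, α j ≠ 0 → j ≤ i) :
    MvPolynomial.coeff (μ - Finsupp.single i 1) (pd α (MvPolynomial.monomial μ (1 : ℂ)))
        = (α i : ℂ) * (μ i : ℂ) ∧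
      (α i : ℂ) * (μ i : ℂ) ≠ 0 ∧
      ∀ ν ∈ (pd α (MvPolynomial.monomial μ (1 : ℂ))).support,
        ν ≠ μ - Finsupp.single i 1 → glexLT ν (μ - Finsupp.single i 1) := by
  have hμi : μ i ≠ 0 := hsupp i hi
  refine ⟨coeff_tsub_single_one_pd_monomial α μ i,
    mul_ne_zero (Int.cast_ne_zero.mpr hi) (Nat.cast_ne_zero.mpr hμi), fun ν hν hne => ?_⟩
  obtain ⟨j, hαj, hμj, rfl⟩ := exists_eq_tsub_single_one_of_mem_support_pd hν
  have hji : j ≠ i := by rintro rfl; exact hne rfl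
  exact glexLT_tsub_single_one ((hmax j hαj).lt_of_ne hji) hμi hμj
end

section
/- Let ι* : Z^n → Z^k be a surjective linear map whose matrix is unimodular (every maximal minor lies in {−1,0,1}, equivalently all minors with respect to some basis lie in {−1,0,1}). Then every element α of ker(ι*) ⊆ Z^n that is primitive and has support minimal among nonzero elements of ker(ι*) (a signed circuit) satisfies α_i ∈ {−1, 0, 1} for all i. -/
/-!
Let `j` lie in the support of the circuit `α`. A rational dependency among the columns of `A`
indexed by `supp α \ {j}` would, after clearing denominators, give a kernel vector with smaller
support; so these columns are independent and extend to a nonsingular `k × k` minor `B`, which by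
unimodularity is invertible over `ℤ`. Since `B` maps the restriction of `α - α j • eⱼ` to
`-α j` times the `j`-th column, inverting `B` shows that `α j` divides every entry of `α`.
Primitivity then forces `α j = ±1`.
-/

open Function Set Submodule

namespace Matrix

variable {l m n R : Type*}

theorem submatrix_mulVec_comp_of_support_subset [Fintype l] [Fintype n] [CommSemiring R]
    (A : Matrix m n R) {g : l → n} (hg : Injective g) {v : n → R}
    (hv : ∀ i, v i ≠ 0 → i ∈ range g) : A.submatrix id g *ᵥ (v ∘ g) = A *ᵥ v := by
  ext r
  refine Fintype.sum_of_injective g hg _ _ (fun i hi => ?_) fun t => rfl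
  by_cases h : v i = 0
  · simp [h]
  · exact absurd (hv i h) hi

theorem dvd_of_isUnit_det_of_dvd_mulVec [Fintype m] [DecidableEq m] [CommRing R]
    {B : Matrix m m R} (hB : IsUnit B.det) {y : m → R} {c : R} (hc : ∀ r, c ∣ (B *ᵥ y) r)
    (t : m) : c ∣ y t := by
  rw [← one_mulVec y, ← nonsing_inv_mul B hB, ← mulVec_mulVec]
  exact Finset.dvd_sum fun r _ => dvd_mul_of_dvd_right (hc r) _

theorem span_range_col_map_eq_top_of_surjective [Fintype m] [Fintype n] [DecidableEq m]
    {S : Type*} [CommRing R] [CommRing S] (f : R →+* S) {A : Matrix m n R}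
    (hA : Surjective A.mulVec) :
    span S (range (A.map f).col) = ⊤ := by
  rw [← range_mulVecLin, eq_top_iff, ← (Pi.basisFun S m).span_eq, span_le]
  rintro _ ⟨r, rfl⟩
  obtain ⟨u, hu⟩ := hA (Pi.single r 1)
  refine ⟨f ∘ u, funext fun i => ?_⟩
  rw [mulVecLin_apply, ← RingHom.map_mulVec, hu]
  by_cases h : i = r
  · subst h; simp
  · simp [h]

theorem exists_submatrix_det_ne_zero [Fintype m] [DecidableEq m] {K : Type*} [Field K]
    {A : Matrix m n K} (hA : span K (range A.col) = ⊤) {s : Set n}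
    (hs : LinearIndepOn K A.col s) :
    ∃ g : m → n, Injective g ∧ s ⊆ range g ∧ (A.submatrix id g).det ≠ 0 := by
  obtain ⟨b, -, hsb, hspan, hb⟩ := exists_linearIndepOn_extension hs (subset_univ s)
  have hbspan : ⊤ ≤ span K (range fun i : b => A.col i) := by
    rw [← hA, ← image_univ, ← image_eq_range]
    exact span_le.mpr hspan
  let e : m ≃ b := (Pi.basisFun K m).indexEquiv (Module.Basis.mk hb hbspan)
  refine ⟨Subtype.val ∘ e, Subtype.val_injective.comp e.injective,
    fun i hi => ⟨e.symm ⟨i, hsb hi⟩, by simp⟩, ?_⟩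
  refine (isUnit_iff_isUnit_det _).mp ?_ |>.ne_zero
  exact linearIndependent_cols_iff_isUnit.mp (hb.comp e e.injective)


theorem linearIndepOn_col_map_intCast [Fintype n] {A : Matrix m n ℤ} {s : Set n}
    (h : ∀ v : n → ℤ, A *ᵥ v = 0 → (∀ i, v i ≠ 0 → i ∈ s) → v = 0) :
    LinearIndepOn ℚ (A.map (Int.cast : ℤ → ℚ)).col s := by
  classical
  have hZ : LinearIndependent ℤ (A.submatrix id ((↑) : s → n)).col := by
    rw [← mulVec_injective_iff]
    change Injective (mulVecLin _)
    rw [injective_iff_map_eq_zero]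
    intro w hw
    set v : n → ℤ := extend (↑) w 0
    have hvw : v ∘ (↑) = w := funext (Subtype.val_injective.extend_apply w 0)
    have hvs : ∀ i, v i ≠ 0 → i ∈ s := fun i hi => by
      by_contra his
      exact hi (extend_apply' _ _ _ fun ⟨t, ht⟩ => his (ht ▸ t.2))
    have hv : A *ᵥ v = 0 := by
      rw [← submatrix_mulVec_comp_of_support_subset A Subtype.val_injective (by simpa using hvs),
        hvw]
      exact hw
    rw [← hvw, h v hv hvs]
    rfl
  rw [LinearIndepOn, ← LinearIndependent.iff_fractionRing ℤ ℚ]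
  exact hZ.map' (LinearMap.compLeft (Algebra.linearMap ℤ ℚ) m)
    (LinearMap.ker_eq_bot.mpr (Int.cast_injective.comp_left))

end Matrix

open Matrix

theorem dvd_apply_of_support_minimal {m n : Type*} [Fintype m] [DecidableEq m] [Fintype n]
    [DecidableEq n] {A : Matrix m n ℤ} (hsurj : Surjective A.mulVec)
    (hunim : ∀ g : m → n, (A.submatrix id g).det ∈ ({-1, 0, 1} : Set ℤ))
    {α : n → ℤ} (hker : A *ᵥ α = 0)
    (hmin : ∀ α' : n → ℤ, α' ≠ 0 → A *ᵥ α' = 0 → ¬ ({i | α' i ≠ 0} ⊂ {i | α i ≠ 0}))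
    {j : n} (hj : α j ≠ 0) (i : n) : α j ∣ α i := by
  set α' := α - Pi.single j (α j)
  have hα' : ∀ i, i ≠ j → α' i = α i := fun i hi => by simp [α', hi]
  have hsupp : {i | α' i ≠ 0} ⊂ {i | α i ≠ 0} :=
    ssubset_of_subset_not_subset (fun i hi => by
      have hij : i ≠ j := by rintro rfl; simp [α'] at hi
      rwa [mem_ofPred, ← hα' i hij])
      fun h => h hj (by simp [α'])
  have hind : LinearIndepOn ℚ (A.map (Int.cast : ℤ → ℚ)).col {i | α' i ≠ 0} :=
    linearIndepOn_col_map_intCast fun v hv hvs => by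
      by_contra hv0
      exact hmin v hv0 hv (ssubset_of_subset_of_ssubset hvs hsupp)
  obtain ⟨g, hg, hsg, hdet⟩ := exists_submatrix_det_ne_zero
    (span_range_col_map_eq_top_of_surjective (Int.castRingHom ℚ) hsurj) hind
  have hdetZ : IsUnit (A.submatrix id g).det := by
    have hne : (A.submatrix id g).det ≠ 0 := fun h => hdet (by
      rw [submatrix_map, ← RingHom.mapMatrix_apply, ← RingHom.map_det, h, map_zero])
    refine Int.isUnit_iff.mpr ?_
    rcases hunim g with h | h | h
    exacts [Or.inr h, absurd h hne, Or.inl h]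
  have hAα' : ∀ r, α j ∣ (A *ᵥ α') r := fun r => by
    simp [α', mulVec_sub, hker]
  have hdvd := dvd_of_isUnit_det_of_dvd_mulVec hdetZ
    (by rwa [submatrix_mulVec_comp_of_support_subset A hg fun i hi => hsg hi])
  by_cases hij : i = j
  · rw [hij]
  by_cases hi : α' i = 0
  · rw [← hα' i hij, hi]; exact dvd_zero _
  obtain ⟨t, rfl⟩ := hsg hi
  rw [← hα' _ hij]
  exact hdvd t

theorem stmt11_general (n k : ℕ) (A : Matrix (Fin k) (Fin n) ℤ)
    (hsurj : Function.Surjective (A.mulVec : (Fin n → ℤ) → (Fin k → ℤ)))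
    (hunim : ∀ g : Fin k → Fin n, (A.submatrix id g).det ∈ ({-1, 0, 1} : Set ℤ))
    (α : Fin n → ℤ) (hker : A.mulVec α = 0)
    (hprim : Finset.univ.gcd α = 1)
    (hmin : ∀ α' : Fin n → ℤ, α' ≠ 0 → A.mulVec α' = 0 →
      ¬ ({i | α' i ≠ 0} ⊂ {i | α i ≠ 0})) :
    ∀ i, α i ∈ ({-1, 0, 1} : Set ℤ) := by
  intro i
  by_cases hi : α i = 0
  · simp [hi]
  have hunit : IsUnit (α i) := isUnit_of_dvd_one <| hprim ▸
    Finset.dvd_gcd fun t _ => dvd_apply_of_support_minimal hsurj hunim hker hmin hi t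
  rcases Int.isUnit_iff.mp hunit with h | h <;> simp [h]

/-- Let `ι* : ℤⁿ → ℤᵏ` be a surjective linear map (given by a matrix `A`)
which is unimodular: every maximal (`k×k`) minor lies in `{−1,0,1}`.  Then every signed
circuit of `ker ι*` — i.e. every primitive element `α ∈ ker ι*` whose support is minimal
among supports of nonzero elements of `ker ι*` — has all entries in `{−1,0,1}`. -/
theorem stmt11 (n k : ℕ) (A : Matrix (Fin k) (Fin n) ℤ)
    (hsurj : Function.Surjective (A.mulVec : (Fin n → ℤ) → (Fin k → ℤ)))
    (hunim : ∀ g : Fin k → Fin n, (A.submatrix id g).det ∈ ({-1, 0, 1} : Set ℤ))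
    (α : Fin n → ℤ) (hker : A.mulVec α = 0) (hne : α ≠ 0)
    (hprim : Finset.univ.gcd α = 1)
    (hmin : ∀ α' : Fin n → ℤ, α' ≠ 0 → A.mulVec α' = 0 →
      ¬ ({i | α' i ≠ 0} ⊂ {i | α i ≠ 0})) :
    ∀ i, α i ∈ ({-1, 0, 1} : Set ℤ) :=
  stmt11_general n k A hsurj hunim α hker hprim hmin
end

section
/- Let K = ker(ι*) for a unimodular surjection ι* : Z^n → Z^k, and let J ⊆ C[e_1,...,e_n] be the C-span of {∂_α e^β : α ∈ K, β ∈ N^n, Supp(α) ⊆ Supp(β)}. Let g = {x ∈ C^n : ⟨α, x⟩ = 0 for all α ∈ K}, and let Sym(g) ⊆ C[e_1,...,e_n] be the subalgebra generated by the linear forms Σ x_i e_i for x ∈ g. Then J is a module over Sym(g), that is, for every ℓ ∈ Sym(g) and f ∈ J, ℓ·f ∈ J. -/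
open MvPolynomial

lemma pd_mul {n : ℕ} (α : Fin n → ℤ) (p q : MvPolynomial (Fin n) ℂ) :
    pd α (p * q) = pd α p * q + p * pd α q := by
  simp [pd, pderiv_mul, smul_add, Finset.sum_add_distrib, Finset.sum_mul,
    Finset.mul_sum, smul_mul_assoc, mul_smul_comm, mul_comm]
  ring

lemma pd_sum {n : ℕ} (α : Fin n → ℤ) (s : Finset (Fin n))
    (f : Fin n → MvPolynomial (Fin n) ℂ) :
    pd α (∑ i ∈ s, f i) = ∑ i ∈ s, pd α (f i) := by
  simp [pd, map_sum, Finset.smul_sum]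
  rw [Finset.sum_comm]

lemma pd_C_mul {n : ℕ} (α : Fin n → ℤ) (c : ℂ) (f : MvPolynomial (Fin n) ℂ) :
    pd α (C c * f) = C c * pd α f := by
  simp [pd, Finset.mul_sum, mul_smul_comm]

lemma pd_linform {n : ℕ} (α : Fin n → ℤ) (x : Fin n → ℂ) :
    pd α (∑ i : Fin n, C (x i) * X i) = C (∑ i : Fin n, (α i : ℂ) * x i) := by
  simp [pd, map_sum, smul_eq_C_mul, Finset.mul_sum, Pi.single_apply, mul_ite, Finset.sum_ite_eq', mul_comm]

lemma prod_pow_succ {n : ℕ} (β : Fin n → ℕ) (i : Fin n) :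
    (∏ j : Fin n, (X j : MvPolynomial (Fin n) ℂ) ^ (β j + if j = i then 1 else 0))
    = X i * ∏ j : Fin n, X j ^ β j := by
  have h : ∀ x : Fin n, (X x : MvPolynomial (Fin n) ℂ) ^ (β x + if x = i then 1 else 0)
      = (if x = i then X x else 1) * X x ^ β x := by
    intro x; split <;> simp [pow_succ, mul_comm]
  rw [Finset.prod_congr rfl fun x _ => h x, Finset.prod_mul_distrib,
    Finset.prod_ite_eq' Finset.univ i (fun x => (X x : MvPolynomial (Fin n) ℂ))]
  simp

lemma key {n k : ℕ} (A : Matrix (Fin k) (Fin n) ℤ) (x : Fin n → ℂ)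
    (hx : ∀ α : Fin n → ℤ, A.mulVec α = 0 → ∑ i : Fin n, (α i : ℂ) * x i = 0)
    (α : Fin n → ℤ) (β : Fin n → ℕ) (hα : A.mulVec α = 0)
    (hβ : ∀ i, α i ≠ 0 → β i ≠ 0) :
    (∑ i : Fin n, C (x i) * X i) * pd α (∏ i : Fin n, X i ^ β i) ∈
      Submodule.span ℂ {f : MvPolynomial (Fin n) ℂ |
          ∃ (α : Fin n → ℤ) (β : Fin n → ℕ), A.mulVec α = 0 ∧
            (∀ i, α i ≠ 0 → β i ≠ 0) ∧
            f = pd α (∏ i : Fin n, MvPolynomial.X i ^ β i)} := by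
  have h1 : (∑ i : Fin n, C (x i) * X i) * pd α (∏ i : Fin n, X i ^ β i)
      = pd α ((∑ i : Fin n, C (x i) * X i) * ∏ i : Fin n, X i ^ β i) := by
    rw [pd_mul, pd_linform, hx α hα]; simp
  rw [h1, Finset.sum_mul, pd_sum]
  refine Submodule.sum_mem _ fun i _ => ?_
  rw [mul_assoc, ← prod_pow_succ, pd_C_mul, ← smul_eq_C_mul]
  refine Submodule.smul_mem _ _ (Submodule.subset_span ?_)
  exact ⟨α, fun j => β j + if j = i then 1 else 0, hα,
    fun j hj => by have := hβ j hj; simp only [ne_eq]; beta_reduce; split <;> omega, rfl⟩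


/-- Let `K = ker ι*` for a unimodular surjection `ι* : ℤⁿ → ℤᵏ` (matrix
`A`), and let `J ⊆ ℂ[e₁,…,eₙ]` be the `ℂ`-span of
`{∂_α e^β : α ∈ K, Supp(α) ⊆ Supp(β)}`.  Let `g = {x ∈ ℂⁿ : ⟨α,x⟩ = 0 ∀ α ∈ K}` and let
`Sym(g)` be the subalgebra of `ℂ[e₁,…,eₙ]` generated by the linear forms `Σ xᵢ eᵢ`,
`x ∈ g`.  Then `J` is a `Sym(g)`-submodule: `ℓ·f ∈ J` for all `ℓ ∈ Sym(g)`, `f ∈ J`. -/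
theorem stmt13 (n k : ℕ) (A : Matrix (Fin k) (Fin n) ℤ)
    (hsurj : Function.Surjective (A.mulVec : (Fin n → ℤ) → (Fin k → ℤ)))
    (hunim : ∀ g : Fin k → Fin n, (A.submatrix id g).det ∈ ({-1, 0, 1} : Set ℤ)) :
    ∀ ℓ ∈ Algebra.adjoin ℂ {p : MvPolynomial (Fin n) ℂ |
        ∃ x : Fin n → ℂ,
          (∀ α : Fin n → ℤ, A.mulVec α = 0 → ∑ i : Fin n, (α i : ℂ) * x i = 0) ∧
          p = ∑ i : Fin n, MvPolynomial.C (x i) * MvPolynomial.X i},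
      ∀ f ∈ Submodule.span ℂ {f : MvPolynomial (Fin n) ℂ |
          ∃ (α : Fin n → ℤ) (β : Fin n → ℕ), A.mulVec α = 0 ∧
            (∀ i, α i ≠ 0 → β i ≠ 0) ∧
            f = pd α (∏ i : Fin n, MvPolynomial.X i ^ β i)},
        ℓ * f ∈ Submodule.span ℂ {f : MvPolynomial (Fin n) ℂ |
          ∃ (α : Fin n → ℤ) (β : Fin n → ℕ), A.mulVec α = 0 ∧
            (∀ i, α i ≠ 0 → β i ≠ 0) ∧
            f = pd α (∏ i : Fin n, MvPolynomial.X i ^ β i)} := by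
  intro ℓ hℓ
  induction hℓ using Algebra.adjoin_induction with
  | mem p hp =>
    intro f hf
    induction hf using Submodule.span_induction with
    | mem g hg =>
      obtain ⟨x, hx, rfl⟩ := hp
      obtain ⟨α, β, hα, hβ, rfl⟩ := hg
      exact key A x hx α β hα hβ
    | zero => simpa using Submodule.zero_mem _
    | add a b _ _ iha ihb => rw [mul_add]; exact Submodule.add_mem _ iha ihb
    | smul c a _ ih => rw [mul_smul_comm]; exact Submodule.smul_mem _ _ ih
  | algebraMap c =>
    intro f hf
    rw [show (algebraMap ℂ (MvPolynomial (Fin n) ℂ)) c * f = c • f from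
      (Algebra.smul_def c f).symm]
    exact Submodule.smul_mem _ _ hf
  | add p q hp hq ihp ihq =>
    intro f hf; rw [add_mul]; exact Submodule.add_mem _ (ihp f hf) (ihq f hf)
  | mul p q hp hq ihp ihq =>
    intro f hf; rw [mul_assoc]; exact ihp _ (ihq f hf)
end

section
/- With J as above (span of ∂_α e^β for α ∈ ker ι*, Supp(α) ⊆ Supp(β)), the initial module in(J) with respect to the graded lexicographic order contains the Stanley–Reisner ideal J_Δbc of the broken circuit complex: every monomial e^μ whose support contains a broken circuit (C minus its lex-maximal element, for C the support of a signed circuit α) lies in in(J). -/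
open MvPolynomial

/-- A signed circuit of `ker(A)`: a primitive element of minimal support. -/
def SignedCircuit {n k : ℕ} (A : Matrix (Fin k) (Fin n) ℤ) (α : Fin n → ℤ) : Prop :=
  A.mulVec α = 0 ∧ α ≠ 0 ∧ Finset.univ.gcd α = 1 ∧
    ∀ α' : Fin n → ℤ, α' ≠ 0 → A.mulVec α' = 0 →
      ¬ ({i | α' i ≠ 0} ⊂ {i | α i ≠ 0})

/-- `ν` is the leading (initial) exponent of `f` for the graded lex order. -/
def IsLeadExp {n : ℕ} (f : MvPolynomial (Fin n) ℂ) (ν : Fin n →₀ ℕ) : Prop :=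
  ν ∈ f.support ∧ ∀ ν' ∈ f.support, ν' ≠ ν → glexLT ν' ν

/-- With `J` the span of the `∂_α e^β` (`α ∈ ker ι*`,
`Supp(α) ⊆ Supp(β)`) for a unimodular surjection `ι* : ℤⁿ → ℤᵏ`, the initial module
`in(J)` (the `ℂ`-span of the initial terms, w.r.t. graded lex, of nonzero elements of
`J`) contains the Stanley–Reisner ideal of the broken circuit complex: every monomial
`e^μ` whose support contains a broken circuit (the support of a signed circuit minus its
maximal element) lies in `in(J)`. -/
theorem stmt14 (n k : ℕ) (A : Matrix (Fin k) (Fin n) ℤ)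
    (hsurj : Function.Surjective (A.mulVec : (Fin n → ℤ) → (Fin k → ℤ)))
    (hunim : ∀ g : Fin k → Fin n, (A.submatrix id g).det ∈ ({-1, 0, 1} : Set ℤ)) :
    ∀ μ : Fin n →₀ ℕ,
      (∃ (α : Fin n → ℤ) (i : Fin n), SignedCircuit A α ∧ α i ≠ 0 ∧
        (∀ j, α j ≠ 0 → j ≤ i) ∧ (∀ j, α j ≠ 0 → j ≠ i → μ j ≠ 0)) →
      MvPolynomial.monomial μ (1 : ℂ) ∈
        Submodule.span ℂ {g : MvPolynomial (Fin n) ℂ |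
          ∃ f ∈ Submodule.span ℂ {f : MvPolynomial (Fin n) ℂ |
              ∃ (α : Fin n → ℤ) (β : Fin n → ℕ), A.mulVec α = 0 ∧
                (∀ i, α i ≠ 0 → β i ≠ 0) ∧
                f = pd α (∏ i : Fin n, MvPolynomial.X i ^ β i)},
            ∃ ν : Fin n →₀ ℕ, IsLeadExp f ν ∧
              g = MvPolynomial.monomial ν (f.coeff ν)} := by
  rintro μ ⟨α, i, hsc, hαi, hle, hsupp⟩
  classical
  set B : Fin n →₀ ℕ := μ + Finsupp.single i 1 with hB
  have hBi : B i = μ i + 1 := by simp [hB]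
  have hBj : ∀ j, j ≠ i → B j = μ j := by
    intro j hj; simp [hB, Finsupp.single_apply, Ne.symm hj]
  have hBsupp : ∀ j, α j ≠ 0 → B j ≠ 0 := by
    intro j hj
    by_cases h : j = i
    · subst h; simp [hBi]
    · rw [hBj j h]; exact hsupp j hj h
  set f : MvPolynomial (Fin n) ℂ := pd α (∏ j : Fin n, X j ^ B j) with hf
  have hmon : (∏ j : Fin n, (X j : MvPolynomial (Fin n) ℂ) ^ B j) = monomial B 1 := by
    rw [monomial_eq]; simp [Finsupp.prod_fintype]
  have hfe : f = ∑ j : Fin n,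
      monomial (B - Finsupp.single j 1) ((α j : ℂ) * (B j : ℂ)) := by
    rw [hf, pd, hmon]
    refine Finset.sum_congr rfl fun j _ => ?_
    rw [pderiv_monomial, smul_monomial, smul_eq_mul, one_mul]
  have hcoeff : ∀ ν, f.coeff ν =
      ∑ j : Fin n, if B - Finsupp.single j 1 = ν then (α j : ℂ) * (B j : ℂ) else 0 := by
    intro ν
    rw [hfe]
    rw [MvPolynomial.coeff_sum]
    exact Finset.sum_congr rfl fun j _ => coeff_monomial _ _ _
  have hme : B - Finsupp.single i 1 = μ := by rw [hB]; exact add_tsub_cancel_right _ _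
  have hinj : ∀ j, B - Finsupp.single j 1 = μ → j = i := by
    intro j hj
    by_contra h
    have h2 := DFunLike.congr_fun hj i
    rw [Finsupp.tsub_apply, Finsupp.single_apply, if_neg h, Nat.sub_zero, hBi] at h2
    omega
  have hcμ : f.coeff μ = (α i : ℂ) * (B i : ℂ) := by
    rw [hcoeff]
    rw [Finset.sum_eq_single i]
    · rw [if_pos hme]
    · intro j _ hne
      exact if_neg fun h => hne (hinj j h)
    · simp
  have hcne : f.coeff μ ≠ 0 := by
    rw [hcμ]
    exact mul_ne_zero (Int.cast_ne_zero.mpr hαi)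
      (Nat.cast_ne_zero.mpr (by rw [hBi]; omega))
  have hsum1 : ∀ (ν : Fin n →₀ ℕ) (j : Fin n), ν + Finsupp.single j 1 = B →
      (∑ l : Fin n, ν l) + 1 = ∑ l : Fin n, B l := by
    intro ν j hadd
    calc (∑ l : Fin n, ν l) + 1
        = ∑ l : Fin n, (ν l + Finsupp.single j 1 l) := by
          rw [Finset.sum_add_distrib]; simp [Finsupp.single_apply]
      _ = ∑ l : Fin n, B l := by rw [← hadd]; simp
  have hBine : B i ≠ 0 := by rw [hBi]; omega
  have hlead : IsLeadExp f μ := by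
    constructor
    · rw [MvPolynomial.mem_support_iff]; exact hcne
    · intro ν hν hνμ
      rw [MvPolynomial.mem_support_iff, hcoeff] at hν
      obtain ⟨j, -, hj⟩ := Finset.exists_ne_zero_of_sum_ne_zero hν
      have hj1 : B - Finsupp.single j 1 = ν := by
        by_contra h; rw [if_neg h] at hj; exact hj rfl
      rw [if_pos hj1] at hj
      have hαj : α j ≠ 0 := by
        intro h; rw [h] at hj; simp at hj
      have hji : j ≠ i := fun h => hνμ (by rw [← hj1, h, hme])
      have hjlt : j < i := lt_of_le_of_ne (hle j hαj) hji
      have hBjne : B j ≠ 0 := hBsupp j hαj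
      right
      constructor
      · have hle1 : Finsupp.single j 1 ≤ B := by
          rw [Finsupp.single_le_iff]; omega
        have e1 : ν + Finsupp.single j 1 = B := by
          rw [← hj1, tsub_add_cancel_of_le hle1]
        have e2 : μ + Finsupp.single i 1 = B := hB.symm
        have := hsum1 ν j e1
        have := hsum1 μ i e2
        omega
      · refine ⟨j, ?_, ?_⟩
        · have h1 : ν j = B j - 1 := by
            rw [← hj1, Finsupp.tsub_apply, Finsupp.single_apply, if_pos rfl]
          have h2 : μ j = B j := (hBj j hji).symm
          omega
        · intro l hl
          have hlj : l ≠ j := ne_of_lt hl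
          have hli : l ≠ i := ne_of_lt (lt_trans hl hjlt)
          rw [← hj1, Finsupp.tsub_apply, Finsupp.single_apply, if_neg (Ne.symm hlj),
            Nat.sub_zero, hBj l hli]
  have hfmem : f ∈ Submodule.span ℂ {f : MvPolynomial (Fin n) ℂ |
      ∃ (α : Fin n → ℤ) (β : Fin n → ℕ), A.mulVec α = 0 ∧
        (∀ i, α i ≠ 0 → β i ≠ 0) ∧
        f = pd α (∏ i : Fin n, MvPolynomial.X i ^ β i)} :=
    Submodule.subset_span ⟨α, ⇑B, hsc.1, hBsupp, hf⟩
  have hgmem : (monomial μ (f.coeff μ)) ∈ Submodule.span ℂ {g : MvPolynomial (Fin n) ℂ |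
      ∃ f ∈ Submodule.span ℂ {f : MvPolynomial (Fin n) ℂ |
          ∃ (α : Fin n → ℤ) (β : Fin n → ℕ), A.mulVec α = 0 ∧
            (∀ i, α i ≠ 0 → β i ≠ 0) ∧
            f = pd α (∏ i : Fin n, MvPolynomial.X i ^ β i)},
        ∃ ν : Fin n →₀ ℕ, IsLeadExp f ν ∧
          g = MvPolynomial.monomial ν (f.coeff ν)} :=
    Submodule.subset_span ⟨f, hfmem, μ, hlead, rfl⟩
  have : (f.coeff μ)⁻¹ • (monomial μ (f.coeff μ)) = monomial μ (1 : ℂ) := by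
    rw [smul_monomial, smul_eq_mul, inv_mul_cancel₀ hcne]
  rw [← this]
  exact Submodule.smul_mem _ _ hgmem
end

section
/- Let R = C[x_1,...,x_k] be graded with generators in positive degree and let M, M' be finitely generated graded R-modules such that M admits a finite filtration by graded submodules with associated graded isomorphic to M' as a graded R-module. If M' is free, then M is free and M ⊗_R C_λ has the same dimension as M' ⊗_R C_0 for every λ ∈ C^k (where C_λ = R/m_λ). -/
/-! The graded pieces `F (j + 1) / F j` are direct summands of the free module `M'`, hence
projective, so every step of the filtration splits and `M` is isomorphic to its associated graded
module, hence to `M'`. For a free module of finite rank `n` over a `K`-algebra `R`, the fiber at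
any `K`-point `R → K` is `Kⁿ`, so its dimension is `n` whatever the point. -/

open MvPolynomial DirectSum

/-- A grading of an `R = ℂ[x₁,…,x_k]`-module by `ℂ`-subspaces, compatible with the
standard grading of the polynomial ring. -/
def IsModuleGrading (k : ℕ) {P : Type*} [AddCommGroup P]
    [Module (MvPolynomial (Fin k) ℂ) P] [Module ℂ P]
    (Pgr : ℕ → Submodule ℂ P) : Prop :=
  DirectSum.IsInternal Pgr ∧
    ∀ (d e : ℕ) (r : MvPolynomial (Fin k) ℂ),
      r ∈ MvPolynomial.homogeneousSubmodule (Fin k) ℂ d →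
        ∀ x ∈ Pgr e, r • x ∈ Pgr (d + e)

def Fin.snocLinearEquiv (R : Type*) [Semiring R] {n : ℕ} (N : Fin (n + 1) → Type*)
    [∀ i, AddCommMonoid (N i)] [∀ i, Module R (N i)] :
    (N (Fin.last n) × ∀ i : Fin n, N i.castSucc) ≃ₗ[R] ∀ i, N i where
  __ := Fin.snocEquiv N
  map_add' x y := funext <| Fin.lastCases (by simp [Fin.snocEquiv]) (by simp [Fin.snocEquiv])
  map_smul' c x := funext <| Fin.lastCases (by simp [Fin.snocEquiv]) (by simp [Fin.snocEquiv])

section Filtration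

variable {R M : Type*} [Ring R] [AddCommGroup M] [Module R M]

theorem Submodule.nonempty_linearEquiv_prod_quotient (N : Submodule R M)
    [Module.Projective R (M ⧸ N)] : Nonempty (M ≃ₗ[R] N × (M ⧸ N)) := by
  obtain ⟨s, hs⟩ := Module.projective_lifting_property N.mkQ LinearMap.id N.mkQ_surjective
  exact ⟨((LinearMap.exact_subtype_mkQ N).splitSurjectiveEquiv N.injective_subtype ⟨s, hs⟩).1⟩

abbrev filtrationQuotient (F : ℕ → Submodule R M) (j : ℕ) : Type _ :=
  F (j + 1) ⧸ (F j).comap (F (j + 1)).subtype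

theorem nonempty_linearEquiv_pi_filtrationQuotient {F : ℕ → Submodule R M} (hF : Monotone F)
    (h0 : F 0 = ⊥) {m : ℕ} (hproj : ∀ j < m, Module.Projective R (filtrationQuotient F j)) :
    Nonempty (F m ≃ₗ[R] ∀ j : Fin m, filtrationQuotient F j) := by
  induction m with
  | zero =>
    have : Subsingleton (F 0) := by rw [h0]; infer_instance
    exact ⟨LinearEquiv.ofSubsingleton _ _⟩
  | succ m ih =>
    obtain ⟨E⟩ := ih fun j hj => hproj j (hj.trans m.lt_succ_self)
    have := hproj m m.lt_succ_self
    obtain ⟨S⟩ := ((F m).comap (F (m + 1)).subtype).nonempty_linearEquiv_prod_quotient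
    exact ⟨S ≪≫ₗ LinearEquiv.prodComm R _ _ ≪≫ₗ
      (LinearEquiv.refl R _).prodCongr (Submodule.comapSubtypeEquivOfLe (hF m.le_succ) ≪≫ₗ E) ≪≫ₗ
      Fin.snocLinearEquiv R fun j : Fin (m + 1) => filtrationQuotient F j⟩

theorem nonempty_linearEquiv_directSum_filtrationQuotient {F : ℕ → Submodule R M}
    (hF : Monotone F) (h0 : F 0 = ⊥) {m : ℕ} (htop : F m = ⊤)
    (hproj : ∀ j < m, Module.Projective R (filtrationQuotient F j)) :
    Nonempty (M ≃ₗ[R] ⨁ j : Fin m, filtrationQuotient F j) := by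
  obtain ⟨E⟩ := nonempty_linearEquiv_pi_filtrationQuotient hF h0 hproj
  exact ⟨Submodule.topEquiv.symm ≪≫ₗ LinearEquiv.ofEq _ _ htop.symm ≪≫ₗ E ≪≫ₗ
    (DirectSum.linearEquivFunOnFintype R _ _).symm⟩

end Filtration

theorem finrank_quotient_ker_smul_top {K R N : Type*} [Field K] [CommRing R] [Algebra K R]
    [AddCommGroup N] [Module R N] [Module K N] [IsScalarTower K R N]
    [Module.Free R N] [Module.Finite R N] (f : R →ₐ[K] K) :
    Module.finrank K (N ⧸ (RingHom.ker f • ⊤ : Submodule R N)) = Module.finrank R N := by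
  have : Nontrivial R := f.toRingHom.domain_nontrivial
  set I := RingHom.ker f
  let b := Module.Free.chooseBasis R N
  let residue : (R ⧸ I) ≃ₐ[K] K :=
    Ideal.quotientKerAlgEquivOfSurjective fun c => ⟨algebraMap K R c, f.commutes c⟩
  let fiber : (N ⧸ (I • ⊤ : Submodule R N)) ≃ₗ[R] (_ →₀ R ⧸ I) :=
    (TensorProduct.quotTensorEquivQuotSMul N I).symm ≪≫ₗ b.repr.lTensor (R ⧸ I) ≪≫ₗ
      TensorProduct.finsuppScalarRight R R (R ⧸ I) _
  rw [(fiber.restrictScalars K ≪≫ₗ Finsupp.mapRange.linearEquiv residue.toLinearEquiv).finrank_eq,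
    Module.finrank_finsupp_self, Module.finrank_eq_card_chooseBasisIndex]

theorem stmt16_general (k : ℕ) (M M' : Type*) [AddCommGroup M] [AddCommGroup M']
    [Module (MvPolynomial (Fin k) ℂ) M] [Module (MvPolynomial (Fin k) ℂ) M']
    [Module ℂ M] [Module ℂ M']
    [IsScalarTower ℂ (MvPolynomial (Fin k) ℂ) M]
    [IsScalarTower ℂ (MvPolynomial (Fin k) ℂ) M']
    [Module.Finite (MvPolynomial (Fin k) ℂ) M']
    [Module.Free (MvPolynomial (Fin k) ℂ) M']
    (m : ℕ) (Fil : ℕ → Submodule (MvPolynomial (Fin k) ℂ) M)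
    (hmono : Monotone Fil) (h0 : Fil 0 = ⊥) (htop : Fil m = ⊤)
    (e : (⨁ j : Fin m,
        (Fil (j + 1) ⧸ (Submodule.comap (Fil ((j : ℕ) + 1)).subtype (Fil j))))
        ≃ₗ[MvPolynomial (Fin k) ℂ] M') :
    Module.Free (MvPolynomial (Fin k) ℂ) M ∧
      ∀ lam : Fin k → ℂ,
        Module.finrank ℂ
            (M ⧸ ((RingHom.ker (MvPolynomial.eval lam : MvPolynomial (Fin k) ℂ →+* ℂ)) •
              (⊤ : Submodule (MvPolynomial (Fin k) ℂ) M))) =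
          Module.finrank ℂ
            (M' ⧸ ((RingHom.ker
                (MvPolynomial.eval (0 : Fin k → ℂ) : MvPolynomial (Fin k) ℂ →+* ℂ)) •
              (⊤ : Submodule (MvPolynomial (Fin k) ℂ) M'))) := by
  have hproj (j : ℕ) (hj : j < m) : Module.Projective _ (filtrationQuotient Fil j) :=
    Module.Projective.directSum_iff.mp (.of_equiv e.symm) ⟨j, hj⟩
  obtain ⟨E⟩ := nonempty_linearEquiv_directSum_filtrationQuotient hmono h0 htop hproj
  let F : M ≃ₗ[MvPolynomial (Fin k) ℂ] M' := E ≪≫ₗ e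
  have : Module.Finite (MvPolynomial (Fin k) ℂ) M := .equiv F.symm
  have hfree : Module.Free (MvPolynomial (Fin k) ℂ) M := .of_equiv F.symm
  exact ⟨hfree, fun lam => (finrank_quotient_ker_smul_top (aeval lam)).trans
    (F.finrank_eq.trans (finrank_quotient_ker_smul_top (aeval 0)).symm)⟩

/-- Let `R = ℂ[x₁,…,x_k]` (generators in positive degree) and let `M, M'`
be finitely generated graded `R`-modules such that `M` admits a finite filtration by
graded submodules with associated graded isomorphic to `M'` as a graded `R`-module.
If `M'` is free, then `M` is free and, for every `λ ∈ ℂ^k`, the fiber `M ⊗_R ℂ_λ`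
(i.e. `M / m_λ M`, where `m_λ` is the maximal ideal of the point `λ`) has the same
`ℂ`-dimension as the fiber `M' ⊗_R ℂ_0` at the origin. -/
theorem stmt16 (k : ℕ) (M M' : Type*) [AddCommGroup M] [AddCommGroup M']
    [Module (MvPolynomial (Fin k) ℂ) M] [Module (MvPolynomial (Fin k) ℂ) M']
    [Module ℂ M] [Module ℂ M']
    [IsScalarTower ℂ (MvPolynomial (Fin k) ℂ) M]
    [IsScalarTower ℂ (MvPolynomial (Fin k) ℂ) M']
    [Module.Finite (MvPolynomial (Fin k) ℂ) M]
    [Module.Finite (MvPolynomial (Fin k) ℂ) M']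
    [Module.Free (MvPolynomial (Fin k) ℂ) M']
    (Mgr : ℕ → Submodule ℂ M) (Mgr' : ℕ → Submodule ℂ M')
    (hM : IsModuleGrading k Mgr) (hM' : IsModuleGrading k Mgr')
    (m : ℕ) (Fil : ℕ → Submodule (MvPolynomial (Fin k) ℂ) M)
    (hmono : Monotone Fil) (h0 : Fil 0 = ⊥) (htop : Fil m = ⊤)
    (hhom : ∀ j, Fil j =
      Submodule.span (MvPolynomial (Fin k) ℂ)
        ((Fil j : Set M) ∩ ⋃ d : ℕ, (Mgr d : Set M)))
    (e : (⨁ j : Fin m,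
        (Fil (j + 1) ⧸ (Submodule.comap (Fil ((j : ℕ) + 1)).subtype (Fil j))))
        ≃ₗ[MvPolynomial (Fin k) ℂ] M')
    (he : ∀ (d : ℕ) (j : Fin m) (x : M) (hx : x ∈ Mgr d) (hx' : x ∈ Fil ((j : ℕ) + 1)),
      e (DirectSum.of
          (fun j : Fin m =>
            (Fil (j + 1) ⧸ (Submodule.comap (Fil ((j : ℕ) + 1)).subtype (Fil j)))) j
          (Submodule.Quotient.mk ⟨x, hx'⟩)) ∈ Mgr' d) :
    Module.Free (MvPolynomial (Fin k) ℂ) M ∧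
      ∀ lam : Fin k → ℂ,
        Module.finrank ℂ
            (M ⧸ ((RingHom.ker (MvPolynomial.eval lam : MvPolynomial (Fin k) ℂ →+* ℂ)) •
              (⊤ : Submodule (MvPolynomial (Fin k) ℂ) M))) =
          Module.finrank ℂ
            (M' ⧸ ((RingHom.ker
                (MvPolynomial.eval (0 : Fin k → ℂ) : MvPolynomial (Fin k) ℂ →+* ℂ)) •
              (⊤ : Submodule (MvPolynomial (Fin k) ℂ) M'))) :=
  stmt16_general k M M' m Fil hmono h0 htop e
end

section
/- For a matroid M on ground set {1,...,n} with a linear order on the ground set, let the broken circuit complex Δ^bc of M be the simplicial complex whose faces are the subsets containing no broken circuit; then the f-vector of Δ^bc equals the sequence of unsigned coefficients of the characteristic polynomial of M (Whitney's theorem), i.e. the number of faces of Δ^bc of size i equals the i-th unsigned Whitney number w_i of M. -/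
open scoped Classical

/-- The rank of a finite set in a matroid: the maximal size of an independent subset. -/
noncomputable def mrk {n : ℕ} (M : Matroid (Fin n)) (S : Finset (Fin n)) : ℕ :=
  (S.powerset.filter (fun T : Finset (Fin n) => M.Indep (T : Set (Fin n)))).sup Finset.card

/-- A circuit of a matroid: a minimal dependent (finite) set. -/
def IsCircuit {n : ℕ} (M : Matroid (Fin n)) (C : Finset (Fin n)) : Prop :=
  ¬ M.Indep ↑C ∧ ∀ x ∈ C, M.Indep ↑(C.erase x)

/-- `F` is a face of the broken circuit complex: it contains no broken circuit
`C ∖ {max C}`, for `C` a circuit of `M` (ground set ordered by `1 < 2 < … < n`). -/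
def IsNBCFace {n : ℕ} (M : Matroid (Fin n)) (F : Finset (Fin n)) : Prop :=
  ∀ (C : Finset (Fin n)) (i : Fin n), IsCircuit M C → i ∈ C →
    (∀ j ∈ C, j ≤ i) → ¬ (C.erase i ⊆ F)

namespace WhitneyAux

variable {n : ℕ} {M : Matroid (Fin n)}

lemma sub_ground (hE : M.E = Set.univ) (X : Set (Fin n)) : X ⊆ M.E := by
  simp [hE]

lemma mrk_eq_card_of_basis (hE : M.E = Set.univ) {I S : Finset (Fin n)}
    (hB : M.IsBasis ↑I ↑S) : mrk M S = I.card := by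
  apply le_antisymm
  · apply Finset.sup_le
    intro T hT
    simp only [Finset.mem_filter, Finset.mem_powerset] at hT
    obtain ⟨J, hJ, hTJ⟩ := hT.2.subset_isBasis_of_subset
      (by exact_mod_cast hT.1) (sub_ground hE _)
    have h1 : (↑T : Set (Fin n)).encard ≤ (↑I : Set (Fin n)).encard := by
      rw [← hJ.encard_eq_encard hB]
      exact Set.encard_mono hTJ
    rwa [Set.encard_coe_eq_coe_finsetCard, Set.encard_coe_eq_coe_finsetCard,
      Nat.cast_le] at h1
  · refine Finset.le_sup (f := Finset.card) ?_
    simp only [Finset.mem_filter, Finset.mem_powerset]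
    exact ⟨by exact_mod_cast hB.subset, hB.indep⟩

lemma exists_finset_basis (hE : M.E = Set.univ) (S : Finset (Fin n)) :
    ∃ I : Finset (Fin n), I ⊆ S ∧ M.IsBasis ↑I ↑S := by
  obtain ⟨I, hI⟩ := M.exists_isBasis ↑S (sub_ground hE _)
  have hfin : I.Finite := S.finite_toSet.subset hI.subset
  refine ⟨hfin.toFinset, ?_, ?_⟩
  · intro x hx
    have := hI.subset (hfin.mem_toFinset.1 hx)
    exact_mod_cast this
  · rwa [Set.Finite.coe_toFinset]

lemma mrk_mono {S T : Finset (Fin n)} (h : S ⊆ T) : mrk M S ≤ mrk M T :=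
  Finset.sup_mono (Finset.filter_subset_filter _ (Finset.powerset_mono.2 h))

lemma mrk_of_indep (hE : M.E = Set.univ) {S : Finset (Fin n)}
    (h : M.Indep ↑S) : mrk M S = S.card :=
  mrk_eq_card_of_basis hE h.isBasis_self

lemma mrk_insert_of_mem_closure (hE : M.E = Set.univ) {S : Finset (Fin n)} {e : Fin n}
    (he : e ∈ M.closure ↑S) : mrk M (insert e S) = mrk M S := by
  obtain ⟨I, hIS, hB⟩ := exists_finset_basis hE S
  have h1 : M.IsBasis ↑I ↑(insert e S) := by
    rw [Finset.coe_insert]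
    refine hB.indep.isBasis_of_subset_of_subset_closure
      (Set.Subset.trans (by exact_mod_cast hIS) (Set.subset_insert e ↑S)) ?_
    rw [Set.insert_subset_iff]
    exact ⟨by rwa [hB.closure_eq_closure], hB.subset_closure⟩
  rw [mrk_eq_card_of_basis hE h1, mrk_eq_card_of_basis hE hB]

lemma exists_circuit_subset {S : Finset (Fin n)} (hS : ¬ M.Indep (↑S : Set (Fin n))) :
    ∃ C, C ⊆ S ∧ IsCircuit M C := by
  obtain ⟨C, hC, hmin⟩ := Finset.exists_min_image
    (S.powerset.filter (fun T : Finset (Fin n) => ¬ M.Indep (↑T : Set (Fin n))))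
    (fun T : Finset (Fin n) => T.card) ⟨S, by simp [hS]⟩
  simp only [Finset.mem_filter, Finset.mem_powerset] at hC
  refine ⟨C, hC.1, hC.2, ?_⟩
  intro x hx
  by_contra hdep
  have hmem : C.erase x ∈ S.powerset.filter (fun T : Finset (Fin n) => ¬ M.Indep (↑T : Set (Fin n))) := by
    simp only [Finset.mem_filter, Finset.mem_powerset]
    exact ⟨(Finset.erase_subset _ _).trans hC.1, hdep⟩
  have h1 := hmin _ hmem
  have h2 : (C.erase x).card < C.card := Finset.card_erase_lt_of_mem hx
  omega

lemma circuit_mem_closure (hE : M.E = Set.univ) {C : Finset (Fin n)}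
    (hC : IsCircuit M C) {x : Fin n} (hx : x ∈ C) :
    x ∈ M.closure ↑(C.erase x) := by
  have hI := hC.2 x hx
  have hdep : M.Dep (insert x ↑(C.erase x)) := by
    rw [show insert x (↑(C.erase x) : Set (Fin n)) = ↑C from by
      rw [← Finset.coe_insert, Finset.insert_erase hx]]
    exact ⟨hC.1, sub_ground hE _⟩
  exact (hI.insert_dep_iff.1 hdep).1

lemma exists_circuit_of_mem_closure (hE : M.E = Set.univ) {X : Finset (Fin n)} {e : Fin n}
    (he : e ∈ M.closure ↑X) (heX : e ∉ X) :
    ∃ C, IsCircuit M C ∧ e ∈ C ∧ C ⊆ insert e X := by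
  obtain ⟨I, hIX, hB⟩ := exists_finset_basis hE X
  have heI : e ∉ (↑I : Set (Fin n)) := fun h => heX (hIX (by exact_mod_cast h))
  have he' : e ∈ M.closure ↑I := by rwa [hB.closure_eq_closure]
  have hdep : ¬ M.Indep (↑(insert e I) : Set (Fin n)) := by
    have hd : M.Dep (insert e ↑I) := hB.indep.insert_dep_iff.2 ⟨he', heI⟩
    rw [Finset.coe_insert]
    exact hd.1
  obtain ⟨C, hCsub, hC⟩ := exists_circuit_subset hdep
  refine ⟨C, hC, ?_, hCsub.trans (Finset.insert_subset_insert _ hIX)⟩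
  by_contra heC
  have hCI : C ⊆ I := fun x hx =>
    (Finset.mem_insert.1 (hCsub hx)).resolve_left (fun h => heC (h ▸ hx))
  exact hC.1 (hB.indep.subset (by exact_mod_cast hCI))

lemma indep_of_nbc (hE : M.E = Set.univ) {F : Finset (Fin n)}
    (hF : IsNBCFace M F) : M.Indep ↑F := by
  by_contra h
  obtain ⟨C, hCF, hC⟩ := exists_circuit_subset h
  have hne : C.Nonempty := Finset.nonempty_iff_ne_empty.2 (fun h' => hC.1 (by simp [h']))
  exact hF C (C.max' hne) hC (C.max'_mem hne) (fun j hj => C.le_max' j hj)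
    ((Finset.erase_subset _ _).trans hCF)

lemma nbc_iff_forall (hE : M.E = Set.univ) {S : Finset (Fin n)} :
    IsNBCFace M S ↔ ∀ e : Fin n, e ∉ M.closure ↑(S.filter (· < e)) := by
  constructor
  · intro hS e he
    have heX : e ∉ S.filter (· < e) := by simp
    obtain ⟨C, hC, heC, hCsub⟩ := exists_circuit_of_mem_closure hE he heX
    refine hS C e hC heC ?_ ?_
    · intro j hj
      rcases Finset.mem_insert.1 (hCsub hj) with h | h
      · exact le_of_eq h
      · exact le_of_lt (Finset.mem_filter.1 h).2
    · intro x hx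
      have hx' := Finset.mem_erase.1 hx
      rcases Finset.mem_insert.1 (hCsub hx'.2) with h | h
      · exact absurd h hx'.1
      · exact (Finset.mem_filter.1 h).1
  · intro h C m hC hm hmax hsub
    apply h m
    have h1 : m ∈ M.closure ↑(C.erase m) := circuit_mem_closure hE hC hm
    refine M.closure_subset_closure (Finset.coe_subset.2 ?_) h1
    intro x hx
    have hx' := Finset.mem_erase.1 hx
    exact Finset.mem_filter.2 ⟨hsub hx, lt_of_le_of_ne (hmax x hx'.2) hx'.1⟩

/-- The descent set of `S`. -/
noncomputable def dsc (M : Matroid (Fin n)) (S : Finset (Fin n)) : Finset (Fin n) :=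
  Finset.univ.filter (fun e => e ∈ M.closure ↑(S.filter (· < e)))

lemma not_nbc_iff_dsc_nonempty (hE : M.E = Set.univ) {S : Finset (Fin n)} :
    ¬ IsNBCFace M S ↔ (dsc M S).Nonempty := by
  rw [nbc_iff_forall hE]
  simp only [dsc, Finset.filter_nonempty_iff, Finset.mem_univ, true_and]
  push_neg
  rfl

/-- Toggle the element `e` in `S`. -/
def tog (S : Finset (Fin n)) (e : Fin n) : Finset (Fin n) :=
  if e ∈ S then S.erase e else insert e S

lemma tog_tog (S : Finset (Fin n)) (e : Fin n) : tog (tog S e) e = S := by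
  by_cases h : e ∈ S
  · have h1 : tog S e = S.erase e := if_pos h
    rw [h1, tog, if_neg (Finset.notMem_erase e S), Finset.insert_erase h]
  · have h1 : tog S e = insert e S := if_neg h
    rw [h1, tog, if_pos (Finset.mem_insert_self e S), Finset.erase_insert h]

lemma tog_ne (S : Finset (Fin n)) (e : Fin n) : tog S e ≠ S := by
  by_cases h : e ∈ S
  · rw [tog, if_pos h, Ne, Finset.erase_eq_self]
    simpa using h
  · rw [tog, if_neg h, Ne, Finset.insert_eq_self]
    exact h

lemma card_tog (S : Finset (Fin n)) (e : Fin n) :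
    ((-1 : ℤ) ^ (tog S e).card) = -((-1) ^ S.card) := by
  by_cases h : e ∈ S
  · rw [tog, if_pos h]
    have : S.card = (S.erase e).card + 1 := (Finset.card_erase_add_one h).symm
    rw [this, pow_succ]
    ring
  · rw [tog, if_neg h, Finset.card_insert_of_notMem h, pow_succ]
    ring

lemma tog_filter_lt_self (S : Finset (Fin n)) (e : Fin n) :
    (tog S e).filter (· < e) = S.filter (· < e) := by
  ext x
  simp only [tog, Finset.mem_filter]
  split_ifs with h
  · simp only [Finset.mem_erase]
    constructor
    · rintro ⟨⟨_, h1⟩, h2⟩; exact ⟨h1, h2⟩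
    · rintro ⟨h1, h2⟩; exact ⟨⟨ne_of_lt h2, h1⟩, h2⟩
  · simp only [Finset.mem_insert]
    constructor
    · rintro ⟨h1 | h1, h2⟩
      · exact absurd h2 (h1 ▸ lt_irrefl _)
      · exact ⟨h1, h2⟩
    · rintro ⟨h1, h2⟩; exact ⟨Or.inr h1, h2⟩

lemma filter_lt_subset_erase {S : Finset (Fin n)} {e f : Fin n} (hef : e ≤ f) :
    S.filter (· < e) ⊆ (S.filter (· < f)).erase e := by
  intro x hx
  have hx' := Finset.mem_filter.1 hx
  exact Finset.mem_erase.2 ⟨ne_of_lt hx'.2, Finset.mem_filter.2 ⟨hx'.1, lt_of_lt_of_le hx'.2 hef⟩⟩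

lemma tog_closure_filter_lt (hE : M.E = Set.univ) {S : Finset (Fin n)} {e f : Fin n}
    (he : e ∈ M.closure ↑(S.filter (· < e))) (hef : e < f) :
    M.closure ↑((tog S e).filter (· < f)) = M.closure ↑(S.filter (· < f)) := by
  set X := S.filter (· < f) with hX
  have he' : e ∈ M.closure ↑(X.erase e) :=
    M.closure_subset_closure (Finset.coe_subset.2 (filter_lt_subset_erase (le_of_lt hef))) he
  have hkey : M.closure (insert e ↑(X.erase e)) = M.closure ↑(X.erase e) :=
    Matroid.closure_insert_eq_of_mem_closure he'
  have hXe : M.closure ↑X = M.closure ↑(X.erase e) := by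
    apply subset_antisymm
    · rw [← hkey]
      apply M.closure_subset_closure
      intro x hx
      rcases eq_or_ne x e with h | h
      · exact Set.mem_insert_iff.2 (Or.inl h)
      · refine Set.mem_insert_iff.2 (Or.inr ?_)
        have hx' : x ∈ X := by exact_mod_cast hx
        exact_mod_cast Finset.mem_erase.2 ⟨h, hx'⟩
    · exact M.closure_subset_closure (Finset.coe_subset.2 (Finset.erase_subset _ _))
  by_cases h : e ∈ S
  · rw [tog, if_pos h]
    have : (S.erase e).filter (· < f) = X.erase e := by
      ext x
      simp only [Finset.mem_filter, Finset.mem_erase, hX]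
      tauto
    rw [this, ← hXe]
  · rw [tog, if_neg h]
    have : (insert e S).filter (· < f) = insert e X := by
      rw [hX, Finset.filter_insert, if_pos hef]
    rw [this, Finset.coe_insert]
    have heX : e ∈ M.closure ↑X := by rw [hXe]; exact he'
    exact Matroid.closure_insert_eq_of_mem_closure heX

lemma mrk_tog (hE : M.E = Set.univ) {S : Finset (Fin n)} {e : Fin n}
    (he : e ∈ M.closure ↑(S.filter (· < e))) : mrk M (tog S e) = mrk M S := by
  have he' : e ∈ M.closure ↑(S.erase e) := by
    refine M.closure_subset_closure (Finset.coe_subset.2 ?_) he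
    intro x hx
    have hx' := Finset.mem_filter.1 hx
    exact Finset.mem_erase.2 ⟨ne_of_lt hx'.2, hx'.1⟩
  by_cases h : e ∈ S
  · rw [tog, if_pos h]
    conv_rhs => rw [← Finset.insert_erase h]
    exact (mrk_insert_of_mem_closure hE he').symm
  · rw [tog, if_neg h]
    rw [Finset.erase_eq_of_notMem h] at he'
    exact mrk_insert_of_mem_closure hE he'

lemma mem_dsc_iff {S : Finset (Fin n)} {e : Fin n} :
    e ∈ dsc M S ↔ e ∈ M.closure ↑(S.filter (· < e)) := by
  simp [dsc]

lemma dsc_tog_max (hE : M.E = Set.univ) {S : Finset (Fin n)}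
    (hne : (dsc M S).Nonempty) :
    ∃ hne' : (dsc M (tog S ((dsc M S).max' hne))).Nonempty,
      (dsc M (tog S ((dsc M S).max' hne))).max' hne' = (dsc M S).max' hne := by
  set e := (dsc M S).max' hne with hedef
  have hed : e ∈ M.closure ↑(S.filter (· < e)) := mem_dsc_iff.1 ((dsc M S).max'_mem hne)
  have h1 : e ∈ dsc M (tog S e) := by
    rw [mem_dsc_iff, tog_filter_lt_self]
    exact hed
  refine ⟨⟨e, h1⟩, ?_⟩
  apply le_antisymm
  · apply Finset.max'_le
    intro f hf
    rcases le_or_gt f e with h | h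
    · exact h
    · exfalso
      rw [mem_dsc_iff, tog_closure_filter_lt hE hed h, ← mem_dsc_iff] at hf
      exact absurd ((dsc M S).le_max' f hf) (not_le.2 h)
  · exact Finset.le_max' _ e h1

end WhitneyAux

open WhitneyAux in
/-- Whitney's theorem: for a matroid `M` of rank `r` on the ordered
ground set `{1,…,n}`, the number of `i`-element faces of the broken circuit complex
equals the absolute value of the coefficient of `t^{r−i}` in the characteristic
polynomial `χ_M(t) = Σ_{S ⊆ E} (−1)^{|S|} t^{r − rk(S)}`; precisely, the number of
`i`-faces equals `(−1)^i` times that coefficient, for all `i ≤ r`. -/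
theorem stmt19 (n : ℕ) (M : Matroid (Fin n)) (hE : M.E = Set.univ)
    (r : ℕ) (hr : r = mrk M Finset.univ) :
    ∀ i ≤ r,
      ((Finset.univ.filter
          (fun F : Finset (Fin n) => IsNBCFace M F ∧ F.card = i)).card : ℤ) =
        (-1) ^ i *
          (∑ S : Finset (Fin n),
            (-1 : Polynomial ℤ) ^ S.card * Polynomial.X ^ (r - mrk M S)).coeff
            (r - i) := by
  intro i hi
  have hbound : ∀ S : Finset (Fin n), mrk M S ≤ r := fun S =>
    hr ▸ mrk_mono (Finset.subset_univ S)
  -- compute the coefficient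
  have hcoeff : (∑ S : Finset (Fin n),
      (-1 : Polynomial ℤ) ^ S.card * Polynomial.X ^ (r - mrk M S)).coeff (r - i)
      = ∑ S ∈ Finset.univ.filter (fun S : Finset (Fin n) => mrk M S = i),
          (-1 : ℤ) ^ S.card := by
    rw [Polynomial.finset_sum_coeff]
    rw [Finset.sum_filter]
    apply Finset.sum_congr rfl
    intro S _
    have h1 : ((-1 : Polynomial ℤ) ^ S.card) = Polynomial.C ((-1 : ℤ) ^ S.card) := by
      simp
    rw [h1, Polynomial.coeff_C_mul, Polynomial.coeff_X_pow]
    have h2 : (r - i = r - mrk M S) ↔ (mrk M S = i) := by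
      have := hbound S
      omega
    by_cases h : mrk M S = i
    · rw [if_pos h, if_pos (h2.2 h), mul_one]
    · rw [if_neg h, if_neg (fun hh => h (h2.1 hh)), mul_zero]
  rw [hcoeff]
  -- split the sum
  set A := Finset.univ.filter (fun S : Finset (Fin n) => mrk M S = i) with hA
  have hsplit := Finset.sum_filter_add_sum_filter_not A (fun S => IsNBCFace M S)
    (fun S : Finset (Fin n) => (-1 : ℤ) ^ S.card)
  -- the non-NBC part vanishes by the involution
  have hinv : ∑ S ∈ A.filter (fun S => ¬ IsNBCFace M S), (-1 : ℤ) ^ S.card = 0 := by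
    apply Finset.sum_involution
      (g := fun S hS => tog S ((dsc M S).max'
        ((not_nbc_iff_dsc_nonempty hE).1 (Finset.mem_filter.1 hS).2)))
    · intro S hS
      rw [card_tog]
      ring
    · intro S hS _
      exact tog_ne S _
    · intro S hS
      have hS' := Finset.mem_filter.1 hS
      have hne := (not_nbc_iff_dsc_nonempty hE).1 hS'.2
      have key : ∀ (q : (dsc M S).Nonempty)
          (p : (dsc M (tog S ((dsc M S).max' q))).Nonempty),
          tog (tog S ((dsc M S).max' q)) ((dsc M (tog S ((dsc M S).max' q))).max' p)
            = S := by
        intro q p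
        obtain ⟨hne', hmax⟩ := dsc_tog_max hE q
        have h2 : (dsc M (tog S ((dsc M S).max' q))).max' p = (dsc M S).max' q := hmax
        rw [h2]
        exact tog_tog S _
      exact key _ _
    · intro S hS
      have hS' := Finset.mem_filter.1 hS
      have hne := (not_nbc_iff_dsc_nonempty hE).1 hS'.2
      set e := (dsc M S).max' hne with hedef
      have hed : e ∈ M.closure ↑(S.filter (· < e)) := mem_dsc_iff.1 ((dsc M S).max'_mem hne)
      have h1 : mrk M (tog S e) = i := by
        rw [mrk_tog hE hed]
        exact (Finset.mem_filter.1 (hS'.1 : S ∈ A)).2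
      obtain ⟨hne', _⟩ := dsc_tog_max hE hne
      exact Finset.mem_filter.2 ⟨Finset.mem_filter.2 ⟨Finset.mem_univ _, h1⟩,
        (not_nbc_iff_dsc_nonempty hE).2 hne'⟩
  rw [← hsplit, hinv, add_zero]
  have hAeq : A.filter (fun S => IsNBCFace M S)
      = Finset.univ.filter (fun F : Finset (Fin n) => IsNBCFace M F ∧ F.card = i) := by
    ext S
    simp only [hA, Finset.mem_filter, Finset.mem_univ, true_and]
    constructor
    · rintro ⟨hm, hnbc⟩
      refine ⟨hnbc, ?_⟩
      rw [← mrk_of_indep hE (indep_of_nbc hE hnbc)]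
      exact hm
    · rintro ⟨hnbc, hcard⟩
      exact ⟨by rw [mrk_of_indep hE (indep_of_nbc hE hnbc), hcard], hnbc⟩
  rw [hAeq]
  have hsum : ∑ S ∈ Finset.univ.filter
      (fun F : Finset (Fin n) => IsNBCFace M F ∧ F.card = i), ((-1 : ℤ) ^ S.card)
      = ((Finset.univ.filter
          (fun F : Finset (Fin n) => IsNBCFace M F ∧ F.card = i)).card : ℤ) * (-1) ^ i := by
    rw [Finset.sum_congr rfl (fun S hS => by rw [(Finset.mem_filter.1 hS).2.2])]
    rw [Finset.sum_const, nsmul_eq_mul]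
  rw [hsum]
  have hone : (-1 : ℤ) ^ i * (-1) ^ i = 1 := by
    rw [← pow_add]
    exact Even.neg_one_pow ⟨i, rfl⟩
  rw [show ((-1 : ℤ) ^ i * (((Finset.univ.filter
      (fun F : Finset (Fin n) => IsNBCFace M F ∧ F.card = i)).card : ℤ) * (-1) ^ i))
      = ((Finset.univ.filter
      (fun F : Finset (Fin n) => IsNBCFace M F ∧ F.card = i)).card : ℤ)
        * ((-1 : ℤ) ^ i * (-1) ^ i) from by ring, hone, mul_one]
end
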